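/- For every graph G, the treewidth of G is at least the bramble number of G minus 1; that is, every tree decomposition of G has a bag that is a hitting set for any given bramble of G. -/

import Mathlib

open SimpleGraph

namespace TWPaper

/-- `(T, B)` is a tree decomposition of `G`. -/
def IsTreeDecomp {V ι : Type*} (G : SimpleGraph V) (T : SimpleGraph ι) (B : ι → Set V) : Prop :=
  T.IsTree ∧
  (∀ v w : V, G.Adj v w → ∃ x, v ∈ B x ∧ w ∈ B x) ∧
  (∀ v : V, (T.induce {x | v ∈ B x}).Connected)

/-- `G` has a tree decomposition of width at most `k`. -/
def HasTDWidthLE {V : Type*} (G : SimpleGraph V) (k : ℕ) : Prop :=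
  ∃ (ι : Type) (T : SimpleGraph ι) (B : ι → Set V),
    IsTreeDecomp G T B ∧ ∀ x, (B x).ncard ≤ k + 1

/-- Treewidth of `G`. -/
noncomputable def treewidth {V : Type*} (G : SimpleGraph V) : ℕ :=
  sInf {k | HasTDWidthLE G k}

/-- Two vertex sets touch: they intersect or an edge joins them. -/
def Touches {V : Type*} (G : SimpleGraph V) (A B : Set V) : Prop :=
  (A ∩ B).Nonempty ∨ ∃ a ∈ A, ∃ b ∈ B, G.Adj a b

/-- A bramble: a set of connected subgraphs (given by vertex sets) that pairwise touch. -/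
def IsBramble {V : Type*} (G : SimpleGraph V) (𝓑 : Set (Set V)) : Prop :=
  (∀ A ∈ 𝓑, (G.induce A).Connected) ∧ ∀ A ∈ 𝓑, ∀ B ∈ 𝓑, Touches G A B

/-- `S` hits every element of `𝓑`. -/
def IsHitting {V : Type*} (𝓑 : Set (Set V)) (S : Set V) : Prop :=
  ∀ A ∈ 𝓑, (S ∩ A).Nonempty

/-- The order of a bramble: minimum size of a hitting set. -/
noncomputable def brambleOrder {V : Type*} (𝓑 : Set (Set V)) : ℕ :=
  sInf {n | ∃ S : Set V, IsHitting 𝓑 S ∧ S.ncard = n}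

/-- The bramble number: maximum order of a bramble. -/
noncomputable def brambleNumber {V : Type*} (G : SimpleGraph V) : ℕ :=
  sSup {n | ∃ 𝓑 : Set (Set V), IsBramble G 𝓑 ∧ brambleOrder 𝓑 = n}

/-- A tangle: connected subgraphs such that any three share a vertex or
meet a common edge's endpoints. -/
def IsTangle {V : Type*} (G : SimpleGraph V) (τ : Set (Set V)) : Prop :=
  (∀ A ∈ τ, (G.induce A).Connected) ∧
  ∀ A ∈ τ, ∀ B ∈ τ, ∀ C ∈ τ,
    (∃ v, v ∈ A ∩ B ∩ C) ∨
    ∃ u v, G.Adj u v ∧ (u ∈ A ∨ v ∈ A) ∧ (u ∈ B ∨ v ∈ B) ∧ (u ∈ C ∨ v ∈ C)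

/-- The tangle number: maximum order of a tangle. -/
noncomputable def tangleNumber {V : Type*} (G : SimpleGraph V) : ℕ :=
  sSup {n | ∃ τ : Set (Set V), IsTangle G τ ∧ brambleOrder τ = n}

/-- `G - X` : delete the vertices of `X` (kept on the same vertex type,
vertices of `X` become isolated). -/
def delVerts {V : Type*} (G : SimpleGraph V) (X : Set V) : SimpleGraph V where
  Adj a b := G.Adj a b ∧ a ∉ X ∧ b ∉ X
  symm := by
    refine ⟨?_⟩
    intro a b h
    exact ⟨h.1.symm, h.2.2, h.2.1⟩
  loopless := by
    refine ⟨?_⟩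
    intro a h
    exact G.loopless.irrefl a h.1

/-- The vertex set of the component of `G - X` containing `v`. -/
def comp {V : Type*} (G : SimpleGraph V) (X : Set V) (v : V) : Set V :=
  {w | (delVerts G X).Reachable v w}

/-- `X` is a `(k, S, c)`-separator of `G`. -/
def IsSeparator {V : Type*} (G : SimpleGraph V) (k : ℕ) (S : Set V) (c : ℝ) (X : Set V) : Prop :=
  X.ncard ≤ k ∧
  ∀ v ∉ X, ((comp G X v ∩ S).ncard : ℝ) ≤ c * ((S \ X).ncard : ℝ)

/-- The separation number `sep_c(G)`. -/
noncomputable def sepNum {V : Type*} (G : SimpleGraph V) (c : ℝ) : ℕ :=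
  sInf {k | ∀ S : Set V, ∃ X : Set V, IsSeparator G k S c X}

/-- `X` is a `(k, S, c)*`-separator of `G`. -/
def IsStarSeparator {V : Type*} (G : SimpleGraph V) (k : ℕ) (S : Set V) (c : ℝ) (X : Set V) :
    Prop :=
  X.ncard ≤ k ∧
  ∀ v ∉ X, ((comp G X v ∩ (S \ X)).ncard : ℝ) ≤ c * (S.ncard : ℝ)

/-- The variant separation number `sep*_c(G)`. -/
noncomputable def sepStarNum {V : Type*} (G : SimpleGraph V) (c : ℝ) : ℕ :=
  sInf {k | ∀ S : Set V, ∃ X : Set V, IsStarSeparator G k S c X}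

/-- `G` has a branch decomposition of width at most `w`. -/
def HasBDWidthLE {V : Type*} (G : SimpleGraph V) (w : ℕ) : Prop :=
  ∃ (ι : Type) (_ : Finite ι) (T : SimpleGraph ι), T.IsTree ∧
    (∀ x : ι, (T.neighborSet x).ncard = 3 ∨ (T.neighborSet x).ncard = 1) ∧
    ∃ θ : G.edgeSet ≃ {x : ι // (T.neighborSet x).ncard = 1},
      ∀ a b : ι, T.Adj a b →
        {v : V | ∃ e₁ e₂ : G.edgeSet, v ∈ e₁.1 ∧ v ∈ e₂.1 ∧
          ¬ (T.deleteEdges {s(a, b)}).Reachable (θ e₁).1 (θ e₂).1}.ncard ≤ w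

/-- Branchwidth of `G` (`0` if no branch decomposition exists). -/
noncomputable def branchwidth {V : Type*} (G : SimpleGraph V) : ℕ :=
  sInf {w | HasBDWidthLE G w}

/-- `H` is a minor of `G`, via a model of branch sets. -/
def IsMinor {W V : Type*} (H : SimpleGraph W) (G : SimpleGraph V) : Prop :=
  ∃ f : W → Set V,
    (∀ w, (G.induce (f w)).Connected) ∧
    (∀ a b, a ≠ b → Disjoint (f a) (f b)) ∧
    ∀ a b, H.Adj a b → ∃ u ∈ f a, ∃ v ∈ f b, G.Adj u v

/-- The lexicographic product `T[K_k]`. -/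
def treeLex {ι : Type*} (T : SimpleGraph ι) (k : ℕ) : SimpleGraph (ι × Fin k) where
  Adj a b := T.Adj a.1 b.1 ∨ (a.1 = b.1 ∧ a.2 ≠ b.2)
  symm := by
    refine ⟨?_⟩
    rintro a b (h | ⟨h1, h2⟩)
    · exact Or.inl h.symm
    · exact Or.inr ⟨h1.symm, h2.symm⟩
  loopless := by
    refine ⟨?_⟩
    rintro a (h | ⟨h1, h2⟩)
    · exact T.loopless.irrefl _ h
    · exact h2 rfl

/-- The lexicographic tree product number. -/
noncomputable def ltp {V : Type*} (G : SimpleGraph V) : ℕ :=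
  sInf {k | ∃ (ι : Type) (T : SimpleGraph ι), T.IsTree ∧ IsMinor G (treeLex T k)}

/-- The cartesian tree product number. -/
noncomputable def ctp {V : Type*} (G : SimpleGraph V) : ℕ :=
  sInf {k | ∃ (ι : Type) (T : SimpleGraph ι), T.IsTree ∧
    IsMinor G (T.boxProd (completeGraph (Fin k)))}

/-- `S` is `k`-linked in `G`. -/
def IsLinked {V : Type*} (G : SimpleGraph V) (k : ℕ) (S : Set V) : Prop :=
  ∀ X : Set V, X.ncard < k → ∃ v, v ∉ X ∧ S.ncard < 2 * (comp G X v ∩ S).ncard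

/-- The linkedness of `G`: maximum `k ≥ 1` for which `G` has a `k`-linked set. -/
noncomputable def linkedness {V : Type*} (G : SimpleGraph V) : ℕ :=
  sSup {k | 0 < k ∧ ∃ S : Set V, IsLinked G k S}

/-- `S` is well-linked in `G`. -/
def WellLinked {V : Type*} (G : SimpleGraph V) (S : Set V) : Prop :=
  ∀ A B : Finset V, ↑A ⊆ S → ↑B ⊆ S → A.card = B.card →
    ∃ (σ : A ≃ B) (p : ∀ a : A, G.Walk (a : V) ((σ a : V))),
      (∀ a, (p a).IsPath) ∧
      ∀ a a' : A, a ≠ a' → ∀ v, v ∈ (p a).support → v ∉ (p a').support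

/-- `S` is externally-well-linked in `G`: the linking paths can be chosen with
no internal vertices in `S`. -/
def ExternallyWellLinked {V : Type*} (G : SimpleGraph V) (S : Set V) : Prop :=
  ∀ A B : Finset V, ↑A ⊆ S → ↑B ⊆ S → A.card = B.card →
    ∃ (σ : A ≃ B) (p : ∀ a : A, G.Walk (a : V) ((σ a : V))),
      (∀ a, (p a).IsPath) ∧
      (∀ a a' : A, a ≠ a' → ∀ v, v ∈ (p a).support → v ∉ (p a').support) ∧
      ∀ a : A, ∀ v ∈ (p a).support, v ∈ S → v = (a : V) ∨ v = ((σ a : V))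

/-- The well-linked number of `G`. -/
noncomputable def wellLinkedNum {V : Type*} (G : SimpleGraph V) : ℕ :=
  sSup {n | ∃ S : Set V, WellLinked G S ∧ S.ncard = n}

/-- A graph is chordal if every cycle of length at least 4 has a chord
(equivalently, there is no induced cycle of length at least four). -/
def Chordal {V : Type*} (H : SimpleGraph V) : Prop :=
  ∀ (v : V) (c : H.Walk v v), c.IsCycle → 4 ≤ c.length →
    ∃ a b, a ∈ c.support ∧ b ∈ c.support ∧ H.Adj a b ∧ s(a, b) ∉ c.edges

/-- `G` is a `k`-tree. -/
inductive IsKTree (k : ℕ) : ∀ (V : Type), SimpleGraph V → Prop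
  | base (V : Type) (G : SimpleGraph V) (h : Nonempty (G ≃g completeGraph (Fin (k + 1)))) :
      IsKTree k V G
  | step (V : Type) (G : SimpleGraph V) (v : V)
      (hdeg : (G.neighborSet v).ncard = k)
      (hcl : G.IsClique (G.neighborSet v))
      (h : IsKTree k ↥{u : V | u ≠ v} (G.induce {u : V | u ≠ v})) :
      IsKTree k V G

/-- The `k × k` grid graph. -/
def grid (k : ℕ) : SimpleGraph (Fin k × Fin k) where
  Adj a b := (a.1 = b.1 ∧ (a.2.val + 1 = b.2.val ∨ b.2.val + 1 = a.2.val)) ∨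
             (a.2 = b.2 ∧ (a.1.val + 1 = b.1.val ∨ b.1.val + 1 = a.1.val))
  symm := by
    refine ⟨?_⟩
    rintro a b (⟨h1, h2⟩ | ⟨h1, h2⟩)
    · exact Or.inl ⟨h1.symm, h2.symm⟩
    · exact Or.inr ⟨h1.symm, h2.symm⟩
  loopless := by
    refine ⟨?_⟩
    rintro a (⟨h1, h2⟩ | ⟨h1, h2⟩) <;> omega

end TWPaper

/-!
Given a tree decomposition `(T, B)` of `G` and a bramble element `A`, the nodes whose bags meet `A`
form a subtree of `T`, because `A` is connected and every edge of `G` lies in a bag; two such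
subtrees intersect because the bramble elements touch. Subtrees of a tree have the Helly property
(three pairwise intersecting ones share the median of three of their points, and induction does the
rest), so a single bag meets every element of the bramble. For a decomposition of width `tw(G)`
this bag bounds the order of every bramble by `tw(G) + 1`.
-/

namespace SimpleGraph

variable {V ι κ : Type*} {G : SimpleGraph V} {T : SimpleGraph ι}

lemma Walk.IsPath.append {u v w : V} {p : G.Walk u v} {q : G.Walk v w} (hp : p.IsPath)
    (hq : q.IsPath) (hpq : ∀ x ∈ p.support, x ∈ q.support → x = v) : (p.append q).IsPath := by
  rw [Walk.isPath_def, Walk.support_append, List.nodup_append]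
  have hq' := hq.support_nodup
  rw [← q.cons_tail_support, List.nodup_cons] at hq'
  refine ⟨hp.support_nodup, hq'.2, fun x hx y hy hxy => ?_⟩
  subst hxy
  have hxv := hpq x hx (q.cons_tail_support ▸ List.mem_cons_of_mem _ hy)
  exact hq'.1 (hxv ▸ hy)

lemma exists_isPath_of_preconnected_induce {s : Set V} (hs : (G.induce s).Preconnected)
    {u v : V} (hu : u ∈ s) (hv : v ∈ s) :
    ∃ p : G.Walk u v, p.IsPath ∧ ∀ x ∈ p.support, x ∈ s := by
  classical
  obtain ⟨p⟩ := hs ⟨u, hu⟩ ⟨v, hv⟩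
  set q := p.map (Embedding.induce s).toHom
  refine ⟨q.bypass, q.bypass_isPath, fun x hx => ?_⟩
  obtain ⟨y, -, rfl⟩ := List.mem_map.mp (Walk.support_map _ p ▸ q.support_bypass_subset_support hx)
  exact y.2

lemma IsAcyclic.exists_mem_support_of_isPath (hT : T.IsAcyclic) {x y z : ι} {p : T.Walk x y}
    {q : T.Walk z x} {r : T.Walk z y} (hp : p.IsPath) (hq : q.IsPath) (hr : r.IsPath) :
    ∃ m ∈ p.support, m ∈ q.support ∧ m ∈ r.support := by
  classical
  -- `m` is the first vertex of `q` on `p`: going along `q` to `m` and then along `p` is a path,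
  -- hence it is `r`.
  obtain ⟨m, hmp, hmq, hfirst⟩ :=
    q.exists_mem_support_forall_mem_support_imp_eq p.support.toFinset
      ⟨x, by simp⟩
  rw [List.mem_toFinset] at hmp
  have hpath : ((q.takeUntil m hmq).append (p.dropUntil m hmp)).IsPath :=
    (hq.takeUntil hmq).append (hp.dropUntil hmp) fun t ht ht' =>
      hfirst t (List.mem_toFinset.mpr (p.support_dropUntil_subset_support hmp ht')) ht
  have hr_eq : r = (q.takeUntil m hmq).append (p.dropUntil m hmp) :=
    congrArg Subtype.val ((hT.subsingleton_path z y).elim ⟨r, hr⟩ ⟨_, hpath⟩)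
  refine ⟨m, hmp, hmq, ?_⟩
  rw [hr_eq, Walk.mem_support_append_iff]
  exact Or.inl (Walk.end_mem_support _)

lemma IsAcyclic.preconnected_induce_inter (hT : T.IsAcyclic) {s t : Set ι}
    (hs : (T.induce s).Preconnected) (ht : (T.induce t).Preconnected) :
    (T.induce (s ∩ t)).Preconnected := by
  rintro ⟨x, hxs, hxt⟩ ⟨y, hys, hyt⟩
  obtain ⟨p, hp, hps⟩ := exists_isPath_of_preconnected_induce hs hxs hys
  obtain ⟨p', hp', hpt⟩ := exists_isPath_of_preconnected_induce ht hxt hyt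
  have hpp' : p = p' := congrArg Subtype.val ((hT.subsingleton_path x y).elim ⟨p, hp⟩ ⟨p', hp'⟩)
  subst hpp'
  exact ⟨p.induce (s ∩ t) fun v hv => ⟨hps v hv, hpt v hv⟩⟩

lemma IsAcyclic.inter_inter_nonempty (hT : T.IsAcyclic) {s t u : Set ι}
    (hs : (T.induce s).Preconnected) (ht : (T.induce t).Preconnected)
    (hu : (T.induce u).Preconnected) (hst : (s ∩ t).Nonempty) (htu : (t ∩ u).Nonempty)
    (hsu : (s ∩ u).Nonempty) : (s ∩ t ∩ u).Nonempty := by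
  obtain ⟨x, hxs, hxt⟩ := hst
  obtain ⟨z, hzt, hzu⟩ := htu
  obtain ⟨y, hys, hyu⟩ := hsu
  obtain ⟨p, hp, hps⟩ := exists_isPath_of_preconnected_induce hs hxs hys
  obtain ⟨q, hq, hqt⟩ := exists_isPath_of_preconnected_induce ht hzt hxt
  obtain ⟨r, hr, hru⟩ := exists_isPath_of_preconnected_induce hu hzu hyu
  obtain ⟨m, hmp, hmq, hmr⟩ := hT.exists_mem_support_of_isPath hp hq hr
  exact ⟨m, ⟨hps m hmp, hqt m hmq⟩, hru m hmr⟩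

lemma IsAcyclic.inter_biInter_nonempty (hT : T.IsAcyclic) (I : Finset κ) {S : κ → Set ι}
    (hS : ∀ i ∈ I, (T.induce (S i)).Preconnected)
    (hSS : ∀ i ∈ I, ∀ j ∈ I, (S i ∩ S j).Nonempty) {R : Set ι}
    (hR : (T.induce R).Preconnected) (hR₀ : R.Nonempty) (hRS : ∀ i ∈ I, (R ∩ S i).Nonempty) :
    (R ∩ ⋂ i ∈ I, S i).Nonempty := by
  classical
  -- Generalising over `R` makes the induction work: the step replaces `R` by `R ∩ S j`.
  induction I using Finset.induction_on generalizing R with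
  | empty => simpa using hR₀
  | insert j I hj ih =>
    have hj : j ∈ insert j I := I.mem_insert_self j
    have hI : ∀ i ∈ I, i ∈ insert j I := fun i => I.mem_insert_of_mem
    have key := ih (fun i hi => hS i (hI i hi)) (fun i hi i' hi' => hSS i (hI i hi) i' (hI i' hi'))
      (hT.preconnected_induce_inter hR (hS j hj)) (hRS j hj) fun i hi =>
        hT.inter_inter_nonempty hR (hS j hj) (hS i (hI i hi)) (hRS j hj) (hSS j hj i (hI i hi))
          (hRS i (hI i hi))
    rwa [Finset.set_biInter_insert, ← Set.inter_assoc]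

lemma IsTree.biInter_nonempty (hT : T.IsTree) (I : Finset κ) {S : κ → Set ι}
    (hS : ∀ i ∈ I, (T.induce (S i)).Preconnected)
    (hSS : ∀ i ∈ I, ∀ j ∈ I, (S i ∩ S j).Nonempty) : (⋂ i ∈ I, S i).Nonempty := by
  have := hT.connected.nonempty
  have huniv : (T.induce Set.univ).Preconnected :=
    (induceUnivIso T).symm.preconnected_iff.mp hT.connected.preconnected
  simpa using hT.isAcyclic.inter_biInter_nonempty I hS hSS huniv Set.univ_nonempty
    fun i hi => by simpa using hSS i hi i hi

lemma preconnected_induce_biUnion {R : V → Set ι} (hR : ∀ v, (T.induce (R v)).Preconnected)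
    (hRG : ∀ ⦃v w⦄, G.Adj v w → (R v ∩ R w).Nonempty) {A : Set V}
    (hA : (G.induce A).Preconnected) : (T.induce (⋃ v ∈ A, R v)).Preconnected := by
  set U := ⋃ v ∈ A, R v
  have hRU : ∀ v ∈ A, R v ⊆ U := fun v hv => Set.subset_biUnion_of_mem hv
  have hreach : ∀ v (hv : v ∈ A) x (hx : x ∈ R v) y (hy : y ∈ R v),
      (T.induce U).Reachable ⟨x, hRU v hv hx⟩ ⟨y, hRU v hv hy⟩ := fun v hv x hx y hy =>
    (hR v ⟨x, hx⟩ ⟨y, hy⟩).map (T.induceHomOfLE (hRU v hv)).toHom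
  have hwalk : ∀ (a b : A), (G.induce A).Walk a b → ∀ x (hx : x ∈ R a) y (hy : y ∈ R b),
      (T.induce U).Reachable ⟨x, hRU a a.2 hx⟩ ⟨y, hRU b b.2 hy⟩ := by
    intro a b p
    induction p with
    | @nil a => exact hreach a a.2
    | @cons a c _ hadj _ ih =>
      intro x hx y hy
      obtain ⟨t, hta, htc⟩ := hRG hadj
      exact (hreach a a.2 x hx t hta).trans (ih t htc y hy)
  rintro ⟨x, hx⟩ ⟨y, hy⟩
  obtain ⟨a, ha, hxa⟩ := Set.mem_iUnion₂.mp hx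
  obtain ⟨b, hb, hyb⟩ := Set.mem_iUnion₂.mp hy
  exact hwalk ⟨a, ha⟩ ⟨b, hb⟩ (hA ⟨a, ha⟩ ⟨b, hb⟩).some x hxa y hyb

end SimpleGraph

namespace TWPaper

variable {V ι : Type*} {G : SimpleGraph V} {T : SimpleGraph ι} {B : ι → Set V}

def bagsMeeting (B : ι → Set V) (A : Set V) : Set ι :=
  {x | (B x ∩ A).Nonempty}

lemma IsTreeDecomp.exists_mem_bag (hTD : IsTreeDecomp G T B) (v : V) : ∃ x, v ∈ B x :=
  let ⟨⟨x, hx⟩⟩ := (hTD.2.2 v).nonempty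
  ⟨x, hx⟩

lemma IsTreeDecomp.preconnected_induce_bagsMeeting (hTD : IsTreeDecomp G T B) {A : Set V}
    (hA : (G.induce A).Preconnected) : (T.induce (bagsMeeting B A)).Preconnected := by
  have hU : bagsMeeting B A = ⋃ v ∈ A, {x | v ∈ B x} := by
    ext x
    simp [bagsMeeting, Set.Nonempty, and_comm]
  rw [hU]
  exact preconnected_induce_biUnion (fun v => (hTD.2.2 v).preconnected) (fun v w => hTD.2.1 v w) hA

lemma IsTreeDecomp.bagsMeeting_inter_nonempty (hTD : IsTreeDecomp G T B) {A A' : Set V}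
    (hAA' : Touches G A A') :
    (bagsMeeting B A ∩ bagsMeeting B A').Nonempty := by
  rcases hAA' with ⟨v, hvA, hvA'⟩ | ⟨a, ha, a', ha', haa'⟩
  · obtain ⟨x, hx⟩ := hTD.exists_mem_bag v
    exact ⟨x, ⟨v, hx, hvA⟩, ⟨v, hx, hvA'⟩⟩
  · obtain ⟨x, hax, ha'x⟩ := hTD.2.1 a a' haa'
    exact ⟨x, ⟨a, hax, ha⟩, ⟨a', ha'x, ha'⟩⟩

lemma IsTreeDecomp.exists_isHitting [Finite V] (hTD : IsTreeDecomp G T B) {𝓑 : Set (Set V)}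
    (h𝓑 : IsBramble G 𝓑) : ∃ x, IsHitting 𝓑 (B x) := by
  obtain ⟨x, hx⟩ := hTD.1.biInter_nonempty (Set.toFinite 𝓑).toFinset (S := bagsMeeting B)
    (fun A hA => hTD.preconnected_induce_bagsMeeting
      (h𝓑.1 A ((Set.Finite.mem_toFinset _).mp hA)).preconnected)
    fun A hA A' hA' => hTD.bagsMeeting_inter_nonempty
      (h𝓑.2 A ((Set.Finite.mem_toFinset _).mp hA) A' ((Set.Finite.mem_toFinset _).mp hA'))
  simp only [Set.mem_iInter, Set.Finite.mem_toFinset] at hx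
  exact ⟨x, hx⟩

lemma hasTDWidthLE_natCard (G : SimpleGraph V) : HasTDWidthLE G (Nat.card V) := by
  refine ⟨Unit, ⊥, fun _ => Set.univ, ⟨.of_subsingleton, fun v w _ => ⟨(), trivial, trivial⟩,
    fun v => ?_⟩, fun _ => by simp⟩
  have : Nonempty {x : Unit | v ∈ (Set.univ : Set V)} := ⟨⟨(), trivial⟩⟩
  exact .of_subsingleton

lemma hasTDWidthLE_treewidth (G : SimpleGraph V) : HasTDWidthLE G (treewidth G) :=
  Nat.sInf_mem (s := {k | HasTDWidthLE G k}) ⟨_, hasTDWidthLE_natCard G⟩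

lemma brambleOrder_le_ncard {𝓑 : Set (Set V)} {S : Set V} (hS : IsHitting 𝓑 S) :
    brambleOrder 𝓑 ≤ S.ncard :=
  Nat.sInf_le ⟨S, hS, rfl⟩

/-- tw(G) ≥ bn(G) - 1; indeed every tree decomposition contains a bag
hitting any given bramble. -/
theorem brambleNumber_le_treewidth {V : Type} [Fintype V] (G : SimpleGraph V) :
    brambleNumber G - 1 ≤ treewidth G ∧
    ∀ (ι : Type) (T : SimpleGraph ι) (B : ι → Set V), IsTreeDecomp G T B →
      ∀ 𝓑 : Set (Set V), IsBramble G 𝓑 → ∃ x, IsHitting 𝓑 (B x) := by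
  refine ⟨?_, fun ι T B hTD 𝓑 h𝓑 => hTD.exists_isHitting h𝓑⟩
  obtain ⟨ι, T, B, hTD, hwidth⟩ := hasTDWidthLE_treewidth G
  suffices brambleNumber G ≤ treewidth G + 1 by omega
  refine csSup_le' ?_
  rintro _ ⟨𝓑, h𝓑, rfl⟩
  obtain ⟨x, hx⟩ := hTD.exists_isHitting h𝓑
  exact (brambleOrder_le_ncard hx).trans (hwidth x)

end TWPaper
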